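/- arXiv:1702.05456 — 2 statements merged into one kernel-verified Lean document; each statement's English description precedes it below -/
import Mathlib

section
/- In a directed graph, a vertex u is flexible (i.e., there exists k such that for all k' ≥ k there is a closed walk of length k' at u) if and only if there exist two closed walks at u whose lengths are coprime. -/
/-- There is a closed walk of length `m` at `u` in the directed graph with edge
relation `R`. -/
def HasClosedWalk {V : Type*} (R : V → V → Prop) (u : V) (m : ℕ) : Prop :=
  ∃ f : ℕ → V, f 0 = u ∧ f m = u ∧ ∀ i < m, R (f i) (f (i + 1))

lemma hasClosedWalk_zero {V : Type*} (R : V → V → Prop) (u : V) :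
    HasClosedWalk R u 0 :=
  ⟨fun _ => u, rfl, rfl, fun i hi => absurd hi (Nat.not_lt_zero i)⟩

lemma HasClosedWalk.add {V : Type*} {R : V → V → Prop} {u : V} {m n : ℕ}
    (hm : HasClosedWalk R u m) (hn : HasClosedWalk R u n) :
    HasClosedWalk R u (m + n) := by
  obtain ⟨f, hf0, hfm, hf⟩ := hm
  obtain ⟨g, hg0, hgn, hg⟩ := hn
  refine ⟨fun i => if i < m then f i else g (i - m), ?_, ?_, ?_⟩
  · rcases Nat.eq_zero_or_pos m with h | h
    · subst h; simpa using hg0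
    · simpa [h] using hf0
  · have h : ¬ (m + n < m) := by omega
    simpa [h] using hgn
  · intro i hi
    by_cases h2 : i < m
    · by_cases h1 : i + 1 < m
      · simpa [h1, h2] using hf i h2
      · have he : g (i + 1 - m) = f (i + 1) := by
          rw [show i + 1 - m = 0 by omega, hg0, show i + 1 = m by omega, hfm]
        simp only [h1, h2, if_true, if_false, he]
        exact hf i h2
    · have h1 : ¬ (i + 1 < m) := by omega
      simp only [h1, h2, if_false]
      rw [show i + 1 - m = (i - m) + 1 by omega]
      exact hg (i - m) (by omega)

lemma HasClosedWalk.nsmul {V : Type*} {R : V → V → Prop} {u : V} {m : ℕ}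
    (hm : HasClosedWalk R u m) : ∀ c : ℕ, HasClosedWalk R u (c * m)
  | 0 => by simpa using hasClosedWalk_zero R u
  | c + 1 => by
      rw [add_mul, one_mul]
      exact (hm.nsmul c).add hm

/-- A vertex `u` of a directed graph is flexible (all sufficiently large lengths are
realized by closed walks at `u`) iff there are two closed walks at `u` whose lengths
are coprime. -/
theorem flexible_iff_coprime_closed_walks {V : Type*} (R : V → V → Prop) (u : V) :
    (∃ k, ∀ k' ≥ k, HasClosedWalk R u k') ↔
      ∃ a b, Nat.Coprime a b ∧ HasClosedWalk R u a ∧ HasClosedWalk R u b := by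
  constructor
  · rintro ⟨k, hk⟩
    exact ⟨k, k + 1, by simp, hk k le_rfl, hk (k + 1) (by omega)⟩
  · rintro ⟨a, b, hco, ha, hb⟩
    rcases Nat.eq_zero_or_pos a with rfl | hapos
    · have hb1 : b = 1 := by simpa [Nat.Coprime] using hco
      subst hb1
      exact ⟨0, fun k' _ => by simpa using hb.nsmul k'⟩
    rcases Nat.eq_zero_or_pos b with rfl | hbpos
    · have ha1 : a = 1 := by simpa [Nat.Coprime] using hco
      subst ha1
      exact ⟨0, fun k' _ => by simpa using ha.nsmul k'⟩
    rcases eq_or_lt_of_le (show 1 ≤ a from hapos) with h1a | h1a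
    · -- a = 1
      have : a = 1 := h1a.symm
      subst this
      exact ⟨0, fun k' _ => by simpa using ha.nsmul k'⟩
    rcases eq_or_lt_of_le (show 1 ≤ b from hbpos) with h1b | h1b
    · have : b = 1 := h1b.symm
      subst this
      exact ⟨0, fun k' _ => by simpa using hb.nsmul k'⟩
    -- now 1 < a, 1 < b
    refine ⟨a * b, fun k' hk' => ?_⟩
    have hfr := frobeniusNumber_pair hco h1a h1b
    have hab : a + b ≤ a * b := Nat.add_le_mul h1a h1b
    have hmem : k' ∈ AddSubmonoid.closure ({a, b} : Set ℕ) := by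
      by_contra hcon
      have hle : k' ≤ a * b - a - b := hfr.2 hcon
      omega
    rw [AddSubmonoid.mem_closure_pair] at hmem
    obtain ⟨x, y, hxy⟩ := hmem
    have : HasClosedWalk R u (x * a + y * b) := (ha.nsmul x).add (hb.nsmul y)
    rw [← hxy]
    simpa using this
end

section
/- Consider the n × n toroidal grid with n odd and a row r in which two horizontally adjacent vertices have colours 1 and 2 (in a proper greedy 3-colouring). For vertices v on row r of colour 1 or 2 define the parity p(v) = (column of v) + c(v) mod 2. Then traversing row r, the number of colour-3 vertices on the row at which the parity of the flanking colour-{1,2} vertices changes is odd. -/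
/-- Parity `p` of the vertex in column `j` (mod `n`) of row `r`:
(column index) + (colour index) mod 2. -/
def rowParity (n : ℕ) (c : ZMod n × ZMod n → Fin 3) (r : ZMod n) (j : ℕ) : ℕ :=
  (j % n + (c ((j : ZMod n), r)).val) % 2

/-- In a proper greedy 3-colouring of the `n × n` toroidal grid with `n` odd, if row
`r` has horizontally adjacent vertices of colours 1 and 2 (indices 0 and 1) at columns
`0` and `n-1`, then the number of colour-3 (index 2) vertices on row `r` at which the
parity of the flanking colour-{1,2} vertices changes is odd. -/
theorem odd_parity_changes (n : ℕ) (hodd : Odd n) (h3 : 3 ≤ n)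
    (c : ZMod n × ZMod n → Fin 3)
    (hproper : ∀ v : ZMod n × ZMod n, c v ≠ c (v + (1, 0)) ∧ c v ≠ c (v + (0, 1)))
    (hgreedy2 : ∀ v, c v = 2 →
      (c (v + (1, 0)) = 0 ∨ c (v + (-1, 0)) = 0 ∨ c (v + (0, 1)) = 0 ∨ c (v + (0, -1)) = 0) ∧
      (c (v + (1, 0)) = 1 ∨ c (v + (-1, 0)) = 1 ∨ c (v + (0, 1)) = 1 ∨ c (v + (0, -1)) = 1))
    (r : ZMod n)
    (h0 : c ((0 : ZMod n), r) = 0)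
    (h1 : c (((n - 1 : ℕ) : ZMod n), r) = 1) :
    Odd ((Finset.range n).filter (fun (j : ℕ) =>
      c ((j : ZMod n), r) = 2 ∧
        rowParity n c r (j - 1) ≠ rowParity n c r (j + 1))).card := by
  set P : ℕ → ℕ := rowParity n c r with hPdef
  set Q : ℕ → Prop := fun j =>
      c ((j : ZMod n), r) = 2 ∧ P (j - 1) ≠ P (j + 1) with hQdef
  have hn0 : 0 < n := by omega
  -- basic formula for P when j < n
  have hP : ∀ j, j < n → P j = (j + (c ((j : ZMod n), r)).val) % 2 := by
    intro j hj
    simp [hPdef, rowParity, Nat.mod_eq_of_lt hj]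
  have hPlt : ∀ j, P j < 2 := by
    intro j; simp [hPdef, rowParity]; omega
  -- successor in the torus
  have hsucc : ∀ j : ℕ, (((j : ZMod n), r) + (1, 0)) = (((j + 1 : ℕ) : ZMod n), r) := by
    intro j
    simp [Prod.ext_iff]
  -- adjacent vertices differ
  have hadj : ∀ j : ℕ, c ((j : ZMod n), r) ≠ c (((j + 1 : ℕ) : ZMod n), r) := by
    intro j
    have := (hproper ((j : ZMod n), r)).1
    rwa [hsucc j] at this
  -- step lemma: parity preserved across two non-2 adjacent vertices
  have stepA : ∀ j, j + 1 < n → c ((j : ZMod n), r) ≠ 2 →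
      c (((j + 1 : ℕ) : ZMod n), r) ≠ 2 → P j = P (j + 1) := by
    intro j hj hc1 hc2
    have hne := hadj j
    have e1 := hP j (by omega)
    have e2 := hP (j + 1) hj
    set a := c ((j : ZMod n), r)
    set b := c (((j + 1 : ℕ) : ZMod n), r)
    have ha : a.val < 3 := a.isLt
    have hb : b.val < 3 := b.isLt
    have ha2 : a.val ≠ 2 := fun h => hc1 (Fin.ext (by simp [h]))
    have hb2 : b.val ≠ 2 := fun h => hc2 (Fin.ext (by simp [h]))
    have hab : a.val ≠ b.val := fun h => hne (Fin.ext h)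
    omega
  -- the key induction
  have main : ∀ m, m < n → c ((m : ZMod n), r) ≠ 2 →
      P m % 2 = ((Finset.range (m + 1)).filter Q).card % 2 := by
    intro m
    induction m using Nat.strong_induction_on with
    | _ m ih =>
      intro hm hcm
      match m with
      | 0 =>
        have hQ0 : ¬ Q 0 := by
          intro h
          have : c ((0 : ZMod n), r) = 2 := by
            have := h.1; simpa using this
          rw [h0] at this; exact absurd this (by decide)
        have : ((Finset.range 1).filter Q).card = 0 := by
          simp [Finset.range_one, Finset.filter_singleton, hQ0]
        rw [this, hP 0 hn0]
        simp [h0]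
      | (k + 1) =>
        by_cases hck : c ((k : ZMod n), r) = 2
        · -- k is a colour-2 vertex; k ≥ 1
          have hk1 : k ≠ 0 := by
            intro h; subst h
            rw [show ((0 : ℕ) : ZMod n) = 0 by simp, h0] at hck
            exact absurd hck (by decide)
          obtain ⟨l, rfl⟩ : ∃ l, k = l + 1 := ⟨k - 1, by omega⟩
          have hcl : c ((l : ZMod n), r) ≠ 2 := by
            intro h
            exact hadj l (h.trans hck.symm)
          have ihl := ih l (by omega) (by omega) hcl
          -- range (l+3) = range (l+1) ∪ {l+1, l+2}
          have hQl2 : ¬ Q (l + 2) := by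
            intro h; exact hcm h.1
          have hcard : ((Finset.range (l + 1 + 1 + 1)).filter Q).card =
              ((Finset.range (l + 1)).filter Q).card + (if Q (l + 1) then 1 else 0) := by
            rw [Finset.range_add_one, Finset.filter_insert, if_neg hQl2,
              Finset.range_add_one, Finset.filter_insert]
            by_cases hq : Q (l + 1)
            · rw [if_pos hq, if_pos hq, Finset.card_insert_of_notMem (by simp)]
            · rw [if_neg hq, if_neg hq]
              omega
          by_cases hchg : P l = P (l + 1 + 1)
          · have hq : ¬ Q (l + 1) := by
              intro h
              exact h.2 (by simpa using hchg)
            rw [hcard, if_neg hq, ← hchg]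
            exact ihl
          · have hq : Q (l + 1) := by
              refine ⟨hck, ?_⟩
              simpa using hchg
            rw [hcard, if_pos hq]
            have h1' := hPlt l
            have h2' := hPlt (l + 1 + 1)
            omega
        · -- k is not colour 2
          have ihk := ih k (by omega) (by omega) hck
          have hstep := stepA k hm hck hcm
          have hq : ¬ Q (k + 1) := fun h => hcm h.1
          have hcard : ((Finset.range (k + 1 + 1)).filter Q).card =
              ((Finset.range (k + 1)).filter Q).card := by
            rw [Finset.range_add_one, Finset.filter_insert, if_neg hq]
          rw [hcard, ← hstep]
          exact ihk
  -- apply at m = n - 1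
  have hlast : c (((n - 1 : ℕ) : ZMod n), r) ≠ 2 := by
    rw [h1]; decide
  have hm := main (n - 1) (by omega) hlast
  have hPn : P (n - 1) = 1 := by
    rw [hP (n - 1) (by omega), h1]
    have : (1 : Fin 3).val = 1 := rfl
    rw [this]
    have : n - 1 + 1 = n := by omega
    rw [this]
    exact Nat.odd_iff.mp hodd
  rw [hPn] at hm
  have : n - 1 + 1 = n := by omega
  rw [this] at hm
  rw [Nat.odd_iff]
  show ((Finset.range n).filter Q).card % 2 = 1
  omega
end
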